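/- Let G be a finite connected simple graph, let σ be an automorphism of G, and let F be a subset of V(G) such that the five sets F, σ(F), σ²(F), σ³(F), σ⁴(F) form a partition of V(G). Set A₂ = F ∪ σ(F) and A₃ = F ∪ σ(F) ∪ σ²(F), and assume the induced subgraphs H₂ = ⟨A₂⟩_G and H₃ = ⟨A₃⟩_G are connected and isometric in G (i.e., d_{H_j}(u,v) = d_G(u,v) for all u, v in A_j). Then for every natural number λ ≥ 1, W_λ(G) = 5·(W_λ(H₃) − W_λ(H₂)). -/

import Mathlib

/-!
Cut `V` into the blocks `Bᵢ = σⁱ(F)`, `i ∈ ℤ/5`; then `σ(Bᵢ) = Bᵢ₊₁`. Since `σ` preserves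
distances, the sum of `d(u,v)^λ` over ordered pairs `(u,v) ∈ Bᵢ × Bⱼ` depends only on `j - i`;
call it `T(j - i)`. Summing over all ordered pairs gives `2 W_λ(G) = 5 ∑ₖ T(k)`. Because `H₂` and
`H₃` are isometric, `2 W_λ(Hⱼ)` is the same sum restricted to `Aⱼ × Aⱼ`, and the pairs in
`A₃ × A₃` but not in `A₂ × A₂` (those meeting `B₂`) realise each difference in `ℤ/5` exactly once,
so `2 W_λ(H₃) - 2 W_λ(H₂) = ∑ₖ T(k)`.
-/

/-- The λ-Wiener index of a graph: `W_λ(G) = Σ_{{u,v}} d_G(u,v)^λ`, the sum running over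
all unordered pairs of distinct vertices. -/
noncomputable def wienerL {V : Type*} [Fintype V] [DecidableEq V]
    (G : SimpleGraph V) (l : ℕ) : ℕ :=
  ∑ p ∈ Finset.univ.filter (fun p : Sym2 V => ¬ p.IsDiag),
    Sym2.lift ⟨fun u v => G.dist u v ^ l, fun u v => by simp [SimpleGraph.dist_comm]⟩ p

open Finset Function

namespace SimpleGraph

variable {V W : Type*} {G : SimpleGraph V} {G' : SimpleGraph W}

theorem Hom.edist_map_le (f : G →g G') (u v : V) : G'.edist (f u) (f v) ≤ G.edist u v := by
  rw [edist_eq_sInf (G := G)]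
  refine le_sInf ?_
  rintro _ ⟨w, rfl⟩
  simpa using (w.map f).edist_le

theorem Iso.edist_map (e : G ≃g G') (u v : V) : G'.edist (e u) (e v) = G.edist u v :=
  le_antisymm (e.toHom.edist_map_le u v) (by simpa using e.symm.toHom.edist_map_le (e u) (e v))

theorem Iso.dist_map (e : G ≃g G') (u v : V) : G'.dist (e u) (e v) = G.dist u v := by
  rw [dist, dist, e.edist_map]

end SimpleGraph

theorem two_nsmul_sum_lift_not_isDiag {α M : Type*} [Fintype α] [DecidableEq α]
    [AddCommMonoid M] (f : α → α → M) (hf : ∀ a b, f a b = f b a) :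
    2 • ∑ z ∈ univ.filter (fun z : Sym2 α => ¬ z.IsDiag), Sym2.lift ⟨f, hf⟩ z =
      ∑ a, ∑ b, if a = b then 0 else f a b := by
  rw [smul_sum, sum_filter, ← sum_product', ← sum_fiberwise (univ ×ˢ univ) Sym2.mk.uncurry]
  refine sum_congr rfl fun z _ => ?_
  induction z using Sym2.ind with
  | h a b =>
    have hfiber : (univ ×ˢ univ).filter (fun p : α × α => Sym2.mk.uncurry p = s(a, b)) =
        {(a, b), (b, a)} := by
      ext ⟨x, y⟩
      simp only [mem_filter, mem_product, mem_univ, Function.uncurry_apply_pair, Sym2.eq_iff,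
        mem_insert, mem_singleton, Prod.mk.injEq, true_and]
    by_cases hab : a = b
    · subst hab
      rw [hfiber]
      simp
    · rw [hfiber, sum_pair (by simp [hab]), if_pos (by simpa using hab), if_neg hab,
        if_neg (Ne.symm hab), two_nsmul, hf b a]
      rfl

section WienerIndex

variable {V : Type*} [DecidableEq V]

-- The diagonal is cut out explicitly rather than through `dist u u ^ l = 0`, which fails at `l = 0`.
theorem two_mul_wienerL [Fintype V] (G : SimpleGraph V) (l : ℕ) :
    2 * wienerL G l = ∑ u, ∑ v, if u = v then 0 else G.dist u v ^ l :=
  two_nsmul_sum_lift_not_isDiag _ _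

theorem two_mul_wienerL_induce_of_isometric (G : SimpleGraph V) (A : Finset V)
    (hiso : ∀ u v : (↑A : Set V), (G.induce (↑A : Set V)).dist u v = G.dist (u : V) (v : V))
    (l : ℕ) :
    2 * wienerL (G.induce (↑A : Set V)) l =
      ∑ u ∈ A, ∑ v ∈ A, if u = v then 0 else G.dist u v ^ l := by
  have hsum (g : V → V → ℕ) :
      ∑ x : (↑A : Set V), ∑ y : (↑A : Set V), g x y = ∑ x ∈ A, ∑ y ∈ A, g x y := by
    simp only [sum_subtype A (fun _ => Iff.rfl)]
    rfl
  simp only [two_mul_wienerL, hiso, Subtype.ext_iff]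
  exact hsum fun u v => if u = v then 0 else G.dist u v ^ l

end WienerIndex

section CyclicPartition

variable {V M : Type*} [DecidableEq V] [AddCommMonoid M]

structure IsCyclicPartition [Fintype V] (σ : V → V) (F : Finset V) (n : ℕ) : Prop where
  disjoint : ∀ i j : Fin n, i ≠ j → Disjoint (F.image σ^[i]) (F.image σ^[j])
  biUnion_eq_univ : univ.biUnion (fun i : Fin n => F.image σ^[i]) = univ

theorem image_iterate_succ (σ : V → V) (F : Finset V) (k : ℕ) :
    F.image σ^[k + 1] = (F.image σ^[k]).image σ := by
  rw [image_image, ← iterate_succ']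

theorem sum_sum_image_of_invariant {σ : V → V} (hσ : Injective σ) {f : V → V → M}
    (hf : ∀ u v, f (σ u) (σ v) = f u v) (s t : Finset V) :
    ∑ u ∈ s.image σ, ∑ v ∈ t.image σ, f u v = ∑ u ∈ s, ∑ v ∈ t, f u v := by
  simp only [sum_image hσ.injOn, hf]

theorem sum_sum_biUnion {ι : Type*} {I : Finset ι} {B : ι → Finset V}
    (hB : (I : Set ι).PairwiseDisjoint B) (f : V → V → M) :
    ∑ u ∈ I.biUnion B, ∑ v ∈ I.biUnion B, f u v =
      ∑ i ∈ I, ∑ j ∈ I, ∑ u ∈ B i, ∑ v ∈ B j, f u v := by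
  simp only [sum_biUnion hB]
  exact sum_congr rfl fun i _ => sum_comm

namespace IsCyclicPartition

variable [Fintype V] {σ : V → V} {F : Finset V} {n : ℕ}

theorem pairwiseDisjoint (h : IsCyclicPartition σ F n) (I : Finset (Fin n)) :
    (I : Set (Fin n)).PairwiseDisjoint fun i => F.image σ^[i] :=
  fun i _ j _ hij => h.disjoint i j hij

theorem image_iterate_self (h : IsCyclicPartition σ F (n + 1)) (hσ : Injective σ) :
    F.image σ^[n + 1] = F := by
  have hsub : F.image σ^[n + 1] ⊆ F := by
    intro x hx
    obtain ⟨k, -, hxk⟩ := mem_biUnion.mp (h.biUnion_eq_univ ▸ mem_univ x)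
    obtain rfl | ⟨k, rfl⟩ := Fin.eq_zero_or_eq_succ k
    · simpa using hxk
    · have hdisj : Disjoint (F.image σ^[n + 1]) (F.image σ^[k + 1]) := by
        rw [image_iterate_succ, image_iterate_succ]
        exact (disjoint_image hσ).mpr
          (h.disjoint (Fin.last n) k.castSucc (Fin.castSucc_ne_last k).symm)
      exact absurd hxk (disjoint_left.mp hdisj hx)
  exact eq_of_subset_of_card_le hsub (by rw [card_image_of_injective _ (hσ.iterate _)])

theorem image_iterate_add_one (h : IsCyclicPartition σ F (n + 1)) (hσ : Injective σ)
    (i : Fin (n + 1)) : F.image σ^[↑(i + 1)] = (F.image σ^[i]).image σ := by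
  rw [← image_iterate_succ, Fin.val_add_one]
  split_ifs with hi
  · rw [hi, Fin.val_last, h.image_iterate_self hσ, iterate_zero, image_id]
  · rfl

open Fin.NatCast in
theorem sum_sum_image_iterate_eq_sub (h : IsCyclicPartition σ F (n + 1)) (hσ : Injective σ)
    {f : V → V → M} (hf : ∀ u v, f (σ u) (σ v) = f u v) (i j : Fin (n + 1)) :
    ∑ u ∈ F.image σ^[i], ∑ v ∈ F.image σ^[j], f u v =
      ∑ u ∈ F, ∑ v ∈ F.image σ^[↑(j - i)], f u v := by
  suffices ∀ k : ℕ, ∀ j : Fin (n + 1),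
      ∑ u ∈ F.image σ^[↑(k : Fin (n + 1))], ∑ v ∈ F.image σ^[j], f u v =
        ∑ u ∈ F, ∑ v ∈ F.image σ^[↑(j - k)], f u v by
    simpa using this i j
  intro k
  induction k with
  | zero => simp
  | succ k ih =>
    intro j
    rw [← sub_add_cancel j 1, Nat.cast_succ, h.image_iterate_add_one hσ,
      h.image_iterate_add_one hσ, sum_sum_image_of_invariant hσ hf, ih, add_sub_add_right_eq_sub]

theorem sum_sum_eq_nsmul (h : IsCyclicPartition σ F (n + 1)) (hσ : Injective σ)
    {f : V → V → M} (hf : ∀ u v, f (σ u) (σ v) = f u v) :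
    ∑ u, ∑ v, f u v = (n + 1) • ∑ d : Fin (n + 1), ∑ u ∈ F, ∑ v ∈ F.image σ^[d], f u v := by
  rw [← h.biUnion_eq_univ, sum_sum_biUnion (h.pairwiseDisjoint univ)]
  simp only [h.sum_sum_image_iterate_eq_sub hσ hf]
  calc ∑ i : Fin (n + 1), ∑ j : Fin (n + 1), ∑ u ∈ F, ∑ v ∈ F.image σ^[↑(j - i)], f u v
      = ∑ _i : Fin (n + 1), ∑ d : Fin (n + 1), ∑ u ∈ F, ∑ v ∈ F.image σ^[d], f u v :=
        sum_congr rfl fun i _ => (Equiv.subRight i).sum_comp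
          (fun d : Fin (n + 1) => ∑ u ∈ F, ∑ v ∈ F.image σ^[d], f u v)
    _ = _ := by simp

theorem sum_sum_add_five_nsmul (h : IsCyclicPartition σ F 5) (hσ : Injective σ)
    {f : V → V → M} (hf : ∀ u v, f (σ u) (σ v) = f u v) :
    ∑ u, ∑ v, f u v + 5 • ∑ u ∈ F ∪ F.image σ, ∑ v ∈ F ∪ F.image σ, f u v =
      5 • ∑ u ∈ F ∪ F.image σ ∪ F.image σ^[2], ∑ v ∈ F ∪ F.image σ ∪ F.image σ^[2], f u v := by
  have hA₂ : F ∪ F.image σ = ({0, 1} : Finset (Fin 5)).biUnion fun i => F.image σ^[i] := by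
    simp
  have hA₃ : F ∪ F.image σ ∪ F.image σ^[2] =
      ({0, 1, 2} : Finset (Fin 5)).biUnion fun i => F.image σ^[i] := by
    simp [union_assoc]
  set T : Fin 5 → M := fun d => ∑ u ∈ F, ∑ v ∈ F.image σ^[d], f u v
  have hblock (i j : Fin 5) : ∑ u ∈ F.image σ^[i], ∑ v ∈ F.image σ^[j], f u v = T (j - i) :=
    h.sum_sum_image_iterate_eq_sub hσ hf i j
  have htotal : ∑ u, ∑ v, f u v = 5 • ∑ d, T d := h.sum_sum_eq_nsmul hσ hf
  rw [htotal, hA₃, hA₂, sum_sum_biUnion (h.pairwiseDisjoint _),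
    sum_sum_biUnion (h.pairwiseDisjoint _)]
  simp only [hblock, sum_insert, mem_insert, mem_singleton, sum_singleton, Fin.sum_univ_five,
    Fin.reduceSub, Fin.reduceEq, or_self, not_false_eq_true]
  abel

end IsCyclicPartition

end CyclicPartition

theorem stmt9_general {V : Type*} [Fintype V] [DecidableEq V]
    (G : SimpleGraph V) (σ : G ≃g G) (F : Finset V)
    (hdisj : ∀ i j : Fin 5, i ≠ j →
      Disjoint (F.image ((⇑σ)^[(i : ℕ)])) (F.image ((⇑σ)^[(j : ℕ)])))
    (hcover : Finset.univ.biUnion (fun i : Fin 5 => F.image ((⇑σ)^[(i : ℕ)])) = Finset.univ)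
    (A₂ A₃ : Finset V)
    (hA₂ : A₂ = F ∪ F.image ⇑σ)
    (hA₃ : A₃ = F ∪ F.image ⇑σ ∪ F.image ((⇑σ)^[2]))
    (hiso₂ : ∀ u v : (↑A₂ : Set V), (G.induce (↑A₂ : Set V)).dist u v = G.dist (u : V) (v : V))
    (hiso₃ : ∀ u v : (↑A₃ : Set V), (G.induce (↑A₃ : Set V)).dist u v = G.dist (u : V) (v : V))
    (l : ℕ) :
    (wienerL G l : ℤ) =
      5 * ((wienerL (G.induce (↑A₃ : Set V)) l : ℤ) -
           (wienerL (G.induce (↑A₂ : Set V)) l : ℤ)) := by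
  have hσ : Injective σ := σ.injective
  have hf : ∀ u v, (if σ u = σ v then 0 else G.dist (σ u) (σ v) ^ l) =
      if u = v then 0 else G.dist u v ^ l := fun u v => by simp only [hσ.eq_iff, σ.dist_map]
  have key := IsCyclicPartition.sum_sum_add_five_nsmul ⟨hdisj, hcover⟩ hσ
    (f := fun u v => if u = v then 0 else G.dist u v ^ l) hf
  rw [← hA₃, ← hA₂, ← two_mul_wienerL, ← two_mul_wienerL_induce_of_isometric G A₂ hiso₂,
    ← two_mul_wienerL_induce_of_isometric G A₃ hiso₃, smul_eq_mul, smul_eq_mul] at key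
  omega

/-- Let `σ` be an automorphism of a finite connected simple graph `G`
such that `F, σ(F), σ²(F), σ³(F), σ⁴(F)` partition the vertex set.  If the induced
subgraphs `H₂ = ⟨F ∪ σ(F)⟩_G` and `H₃ = ⟨F ∪ σ(F) ∪ σ²(F)⟩_G` are connected and
isometric in `G`, then for every `λ ≥ 1`, `W_λ(G) = 5·(W_λ(H₃) − W_λ(H₂))`. -/
theorem stmt9 {V : Type*} [Fintype V] [DecidableEq V]
    (G : SimpleGraph V) (hG : G.Connected) (σ : G ≃g G) (F : Finset V)
    (hdisj : ∀ i j : Fin 5, i ≠ j →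
      Disjoint (F.image ((⇑σ)^[(i : ℕ)])) (F.image ((⇑σ)^[(j : ℕ)])))
    (hcover : Finset.univ.biUnion (fun i : Fin 5 => F.image ((⇑σ)^[(i : ℕ)])) = Finset.univ)
    (A₂ A₃ : Finset V)
    (hA₂ : A₂ = F ∪ F.image ⇑σ)
    (hA₃ : A₃ = F ∪ F.image ⇑σ ∪ F.image ((⇑σ)^[2]))
    (hconn₂ : (G.induce (↑A₂ : Set V)).Connected)
    (hconn₃ : (G.induce (↑A₃ : Set V)).Connected)
    (hiso₂ : ∀ u v : (↑A₂ : Set V), (G.induce (↑A₂ : Set V)).dist u v = G.dist (u : V) (v : V))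
    (hiso₃ : ∀ u v : (↑A₃ : Set V), (G.induce (↑A₃ : Set V)).dist u v = G.dist (u : V) (v : V))
    (l : ℕ) (hl : 1 ≤ l) :
    (wienerL G l : ℤ) =
      5 * ((wienerL (G.induce (↑A₃ : Set V)) l : ℤ) -
           (wienerL (G.induce (↑A₂ : Set V)) l : ℤ)) :=
  stmt9_general G σ F hdisj hcover A₂ A₃ hA₂ hA₃ hiso₂ hiso₃ l
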